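/- Closed form of the A₁ propagator series: for all real u < λ < μ, the series Σ_{k=0}^∞ (−1)^{k+1} I^{(k+1)}_{A₁}(u, μ) · I^{(−k)}_{A₁}(u, λ) = Σ_{k=0}^∞ (2k+1) (μ−u)^{−k−3/2} (λ−u)^{k−1/2} converges absolutely and its sum equals ((μ−u) + (λ−u)) / ( √((μ−u)(λ−u)) · (μ−λ)² ). (This is the commutator [∂_μ f̂₊^{A₁}(u,μ), ∂_λ f̂₋^{A₁}(u,λ)] for the A₁-singularity, i.e. the i = j case of the 2-form ω^{ij}(μ,λ) with trivial R-matrix.) -/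

import Mathlib

/-- The `A₁` period integrals `I^{(k)}_{A₁}(u, λ)`, for real `u < λ`:
`I^{(k)} = (−1)^k ((2k−1)!!/2^{k−1/2}) (λ−u)^{−k−1/2}` for `k ≥ 0`, and
`I^{(−m−1)} = 2 · (2^{m+1/2}/(2m+1)!!) (λ−u)^{m+1/2}` for `m ≥ 0`
(note that in both cases the exponent of `λ − u` is `−k − 1/2`). -/
noncomputable def IA1 (k : ℤ) (u l : ℝ) : ℝ :=
  if 0 ≤ k then
    (-1 : ℝ) ^ k * (Nat.doubleFactorial (2 * k.toNat - 1) : ℝ) / (2 : ℝ) ^ ((k : ℝ) - 1/2)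
      * (l - u) ^ (-(k : ℝ) - 1/2)
  else
    2 * (2 : ℝ) ^ (-(k : ℝ) - 1/2) / (Nat.doubleFactorial (2 * (-k - 1).toNat + 1) : ℝ)
      * (l - u) ^ (-(k : ℝ) - 1/2)

/-
The constants of `I^{(k+1)}(u, μ)` and `I^{(−k)}(u, λ)` are reciprocal up to the sign `(−1)^{k+1}`
and the factor `(2k+1)!!/(2k−1)!! = 2k+1`, so the `k`-th term is
`(2k+1) xᵏ / ((μ−u) √((μ−u)(λ−u)))` with `x = (λ−u)/(μ−u) ∈ (0, 1)`.
Differentiating the geometric series gives `Σ (2k+1) xᵏ = (1+x)/(1−x)²`, which is the closed form.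
-/

open scoped Nat

theorem hasSum_two_mul_add_one_mul_geometric {𝕜 : Type*} [NormedField 𝕜] {r : 𝕜} (hr : ‖r‖ < 1) :
    HasSum (fun n : ℕ ↦ (2 * n + 1) * r ^ n) ((1 + r) / (1 - r) ^ 2) := by
  have hr1 : 1 - r ≠ 0 := sub_ne_zero.2 fun h ↦ by simp [← h] at hr
  have h := ((hasSum_coe_mul_geometric_of_norm_lt_one hr).mul_left 2).add
    (hasSum_geometric_of_norm_lt_one hr)
  rw [show 2 * (r / (1 - r) ^ 2) + (1 - r)⁻¹ = (1 + r) / (1 - r) ^ 2 by field_simp; ring] at h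
  simpa only [add_mul, one_mul, mul_assoc] using h

theorem Nat.cast_doubleFactorial_two_mul_add_one {R : Type*} [Semiring R] (k : ℕ) :
    ((2 * k + 1)‼ : R) = (2 * k + 1) * (2 * k - 1)‼ := by
  push_cast [Nat.doubleFactorial_add_one]
  rfl

theorem IA1_natCast_add_one (k : ℕ) (u l : ℝ) :
    IA1 (k + 1) u l = (-1) ^ (k + 1) * (2 * k + 1)‼ / 2 ^ ((k : ℝ) + 1 / 2)
      * (l - u) ^ (-(k : ℝ) - 3 / 2) := by
  rw [IA1, if_pos (by positivity), show ((k : ℤ) + 1).toNat = k + 1 by omega,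
    show 2 * (k + 1) - 1 = 2 * k + 1 by omega, zpow_add_one₀ (by norm_num), zpow_natCast]
  push_cast
  ring_nf

theorem IA1_neg_natCast (k : ℕ) (u l : ℝ) :
    IA1 (-k) u l = 2 ^ ((k : ℝ) + 1 / 2) / (2 * k - 1)‼ * (l - u) ^ ((k : ℝ) - 1 / 2) := by
  rcases k with _ | n
  · rw [IA1, if_pos (by simp)]
    norm_num [← Real.rpow_neg]
  · rw [IA1, if_neg (by omega), show (-(-((n + 1 : ℕ) : ℤ)) - 1).toNat = n by omega,
      show 2 * (n + 1) - 1 = 2 * n + 1 by omega]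
    push_cast
    rw [show -(-((n : ℝ) + 1)) - 1 / 2 = n + 1 / 2 by ring,
      show (n : ℝ) + 1 + 1 / 2 = 1 + (n + 1 / 2) by ring, Real.rpow_add two_pos 1, Real.rpow_one]
    ring_nf

theorem IA1_propagator_term (k : ℕ) (u l m : ℝ) :
    (-1 : ℝ) ^ (k + 1) * IA1 ((k : ℤ) + 1) u m * IA1 (-(k : ℤ)) u l
      = (2 * (k : ℝ) + 1) * (m - u) ^ (-(k : ℝ) - 3 / 2) * (l - u) ^ ((k : ℝ) - 1 / 2) := by
  rw [IA1_natCast_add_one, IA1_neg_natCast, Nat.cast_doubleFactorial_two_mul_add_one]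
  have hsign : (-1 : ℝ) ^ (k + 1) * (-1) ^ (k + 1) = 1 := by rw [← mul_pow]; norm_num
  have hdf : ((2 * k - 1)‼ : ℝ) ≠ 0 := by positivity
  have hpow : (2 : ℝ) ^ ((k : ℝ) + 1 / 2) ≠ 0 := by positivity
  calc _ = (-1 : ℝ) ^ (k + 1) * (-1) ^ (k + 1) * (2 * k + 1) * ((2 * k - 1)‼ / (2 * k - 1)‼)
        * (2 ^ ((k : ℝ) + 1 / 2) / 2 ^ ((k : ℝ) + 1 / 2))
        * (m - u) ^ (-(k : ℝ) - 3 / 2) * (l - u) ^ ((k : ℝ) - 1 / 2) := by ring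
    _ = _ := by rw [hsign, div_self hdf, div_self hpow]; ring

theorem Real.rpow_neg_sub_three_halves_mul_rpow_sub_half {a b : ℝ} (ha : 0 < a) (hb : 0 < b)
    (k : ℕ) :
    a ^ (-(k : ℝ) - 3 / 2) * b ^ ((k : ℝ) - 1 / 2) = (b / a) ^ k / (a * √(a * b)) := by
  rw [show -(k : ℝ) - 3 / 2 = -((k + 1 : ℕ) + 1 / 2) by push_cast; ring, Real.rpow_neg ha.le,
    Real.rpow_add ha, Real.rpow_sub hb, Real.rpow_natCast, Real.rpow_natCast,
    Real.sqrt_mul ha.le, ← Real.sqrt_eq_rpow, ← Real.sqrt_eq_rpow, div_pow]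
  have := Real.sqrt_pos.2 ha
  have := Real.sqrt_pos.2 hb
  field_simp
  ring

theorem hasSum_A1_propagator {a b : ℝ} (hb : 0 < b) (hba : b < a) :
    HasSum (fun k : ℕ ↦ (2 * (k : ℝ) + 1) * a ^ (-(k : ℝ) - 3 / 2) * b ^ ((k : ℝ) - 1 / 2))
      ((a + b) / (√(a * b) * (a - b) ^ 2)) := by
  have ha : 0 < a := hb.trans hba
  have hx : ‖b / a‖ < 1 := by
    rw [Real.norm_of_nonneg (by positivity), div_lt_one ha]; exact hba
  have hab := Real.sqrt_pos.2 (mul_pos ha hb)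
  have hsub : a - b ≠ 0 := sub_ne_zero.2 hba.ne'
  have h := (hasSum_two_mul_add_one_mul_geometric hx).div_const (a * √(a * b))
  rw [show (1 + b / a) / (1 - b / a) ^ 2 / (a * √(a * b)) = (a + b) / (√(a * b) * (a - b) ^ 2) by
    field_simp] at h
  exact h.congr_fun fun k ↦ by
    rw [mul_assoc, Real.rpow_neg_sub_three_halves_mul_rpow_sub_half ha hb, mul_div_assoc]

/-- Closed form of the `A₁` propagator series: for `u < λ < μ`, the series
`Σ_{k≥0} (−1)^{k+1} I^{(k+1)}_{A₁}(u, μ) · I^{(−k)}_{A₁}(u, λ)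
  = Σ_{k≥0} (2k+1)(μ−u)^{−k−3/2}(λ−u)^{k−1/2}`
converges absolutely, with sum `((μ−u)+(λ−u)) / (√((μ−u)(λ−u)) (μ−λ)²)`. -/
theorem A1_propagator_closed_form (u l m : ℝ) (h1 : u < l) (h2 : l < m) :
    (∀ k : ℕ, (-1 : ℝ) ^ (k + 1) * IA1 ((k : ℤ) + 1) u m * IA1 (-(k : ℤ)) u l
        = (2 * (k : ℝ) + 1) * (m - u) ^ (-(k : ℝ) - 3/2) * (l - u) ^ ((k : ℝ) - 1/2)) ∧
    Summable (fun k : ℕ =>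
        |(2 * (k : ℝ) + 1) * (m - u) ^ (-(k : ℝ) - 3/2) * (l - u) ^ ((k : ℝ) - 1/2)|) ∧
    ∑' k : ℕ, (2 * (k : ℝ) + 1) * (m - u) ^ (-(k : ℝ) - 3/2) * (l - u) ^ ((k : ℝ) - 1/2)
        = ((m - u) + (l - u)) / (Real.sqrt ((m - u) * (l - u)) * (m - l) ^ 2) := by
  have hS := hasSum_A1_propagator (sub_pos.2 h1) (sub_lt_sub_right h2 u)
  rw [show m - l = (m - u) - (l - u) by ring]
  exact ⟨fun k ↦ IA1_propagator_term k u l m, hS.summable.abs, hS.tsum_eq⟩
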